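/- arXiv:1901.06365 — 3 statements merged into one kernel-verified Lean document; each statement's English description precedes it below -/
import Mathlib

section
/- Let N ≥ 1 and let h_0, h_1, ..., h_N > 0 be positive step sizes. Define the tridiagonal matrix P ∈ ℝ^{N×N} with entries P_{i,i} = -2/(h_{i-1} h_i), subdiagonal entries P_{i+1,i} = 2/(h_i(h_i + h_{i+1})) and superdiagonal entries P_{i,i+1} = 2/(h_i(h_{i-1} + h_i)). Then the spectral norm of P satisfies ‖P‖₂ ≤ max_{i=0,...,N} (4/h_i²). -/
open Matrix Finset

/-- Spectral (operator 2-) norm of a real square matrix. -/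
noncomputable def specNorm {N : ℕ} (A : Matrix (Fin N) (Fin N) ℝ) : ℝ :=
  ‖Matrix.toEuclideanCLM (𝕜 := ℝ) A‖

/-- The nonuniform second-difference (tridiagonal) matrix on a grid with step sizes `h`. -/
noncomputable def Pmat (N : ℕ) (h : Fin (N + 1) → ℝ) : Matrix (Fin N) (Fin N) ℝ :=
  Matrix.of fun i j =>
    if (i : ℕ) = (j : ℕ) then -2 / (h i.castSucc * h i.succ)
    else if (i : ℕ) + 1 = (j : ℕ) then 2 / (h i.succ * (h i.castSucc + h i.succ))
    else if (j : ℕ) + 1 = (i : ℕ) then 2 / (h i.castSucc * (h i.castSucc + h i.succ))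
    else 0

/-!
Let `m` be the smallest step. Each entry of `P` is bounded in absolute value by the
corresponding entry of the uniform-grid stencil `|(1, -2, 1)| / m²`, so every row and every
column of `|P|` sums to at most `4 / m²`. The Schur test `‖A‖₂ ≤ √(R C)`, with `R` and `C`
bounds on the absolute row and column sums, then gives `‖P‖₂ ≤ 4 / m² = maxᵢ 4 / hᵢ²`.
-/

theorem Finset.sq_sum_mul_le_sum_mul_sum_mul_sq {ι R : Type*} [CommSemiring R] [LinearOrder R]
    [IsStrictOrderedRing R] [ExistsAddOfLE R] (s : Finset ι) {w : ι → R} (hw : ∀ i ∈ s, 0 ≤ w i)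
    (y : ι → R) : (∑ i ∈ s, w i * y i) ^ 2 ≤ (∑ i ∈ s, w i) * ∑ i ∈ s, w i * y i ^ 2 :=
  sum_sq_le_sum_mul_sum_of_sq_le_mul s hw (fun i hi => mul_nonneg (hw i hi) (sq_nonneg _))
    fun i _ => by rw [mul_pow, sq, mul_assoc]

theorem Matrix.norm_toEuclideanCLM_le_sqrt_of_sum_norm_le {𝕜 ι : Type*} [RCLike 𝕜] [Fintype ι]
    [DecidableEq ι] (A : Matrix ι ι 𝕜) {R C : ℝ} (hR : 0 ≤ R)
    (hrow : ∀ i, ∑ j, ‖A i j‖ ≤ R) (hcol : ∀ j, ∑ i, ‖A i j‖ ≤ C) :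
    ‖toEuclideanCLM (𝕜 := 𝕜) A‖ ≤ √(R * C) := by
  refine ContinuousLinearMap.opNorm_le_bound _ (Real.sqrt_nonneg _) fun x => ?_
  rw [← Real.sqrt_sq (norm_nonneg x), ← Real.sqrt_mul' _ (sq_nonneg _)]
  refine Real.le_sqrt_of_sq_le ?_
  have hrow_sq : ∀ i, ‖(A *ᵥ x.ofLp) i‖ ^ 2 ≤ R * ∑ j, ‖A i j‖ * ‖x j‖ ^ 2 := fun i =>
    calc ‖(A *ᵥ x.ofLp) i‖ ^ 2 ≤ (∑ j, ‖A i j‖ * ‖x j‖) ^ 2 := by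
          gcongr
          refine (norm_sum_le _ _).trans_eq ?_
          simp only [norm_mul]
      _ ≤ (∑ j, ‖A i j‖) * ∑ j, ‖A i j‖ * ‖x j‖ ^ 2 :=
          sq_sum_mul_le_sum_mul_sum_mul_sq _ (fun j _ => norm_nonneg _) _
      _ ≤ R * ∑ j, ‖A i j‖ * ‖x j‖ ^ 2 := by gcongr; exact hrow i
  calc ‖toEuclideanCLM (𝕜 := 𝕜) A x‖ ^ 2 = ∑ i, ‖(A *ᵥ x.ofLp) i‖ ^ 2 := by
        rw [EuclideanSpace.norm_sq_eq, ofLp_toEuclideanCLM]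
    _ ≤ ∑ i, R * ∑ j, ‖A i j‖ * ‖x j‖ ^ 2 := sum_le_sum fun i _ => hrow_sq i
    _ = R * ∑ j, (∑ i, ‖A i j‖) * ‖x j‖ ^ 2 := by
        rw [← mul_sum, sum_comm]; simp only [sum_mul]
    _ ≤ R * ∑ j, C * ‖x j‖ ^ 2 := by gcongr with j; exact hcol j
    _ = R * C * ‖x‖ ^ 2 := by rw [← mul_sum, EuclideanSpace.norm_sq_eq, mul_assoc]

theorem Finset.sum_ite_le_of_subsingleton {α M : Type*} [Fintype α] [AddCommMonoid M]
    [PartialOrder M] [IsOrderedAddMonoid M] {p : α → Prop} [DecidablePred p]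
    (hp : ∀ a b, p a → p b → a = b) {c : M} (hc : 0 ≤ c) :
    ∑ a, (if p a then c else 0) ≤ c := by
  rw [← sum_filter]
  calc ∑ _ ∈ univ.filter p, c = #(univ.filter p) • c := sum_const c
    _ ≤ 1 • c := nsmul_le_nsmul_left hc <| card_le_one.mpr fun a ha b hb =>
        hp a b (mem_filter.mp ha).2 (mem_filter.mp hb).2
    _ = c := one_nsmul c

def absStencil {N : ℕ} (i j : Fin N) : ℝ :=
  (if (i : ℕ) = j then 2 else 0) + (if (i : ℕ) + 1 = j then 1 else 0) +
    (if (j : ℕ) + 1 = i then 1 else 0)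

theorem absStencil_comm {N : ℕ} (i j : Fin N) : absStencil i j = absStencil j i := by
  simp only [absStencil, eq_comm (a := (i : ℕ)) (b := (j : ℕ))]
  ring

theorem sum_absStencil_le {N : ℕ} (i : Fin N) : ∑ j, absStencil i j ≤ 4 :=
  calc ∑ j, absStencil i j = (∑ j : Fin N, if (i : ℕ) = j then 2 else 0) +
        (∑ j : Fin N, if (i : ℕ) + 1 = j then 1 else 0) +
        ∑ j : Fin N, if (j : ℕ) + 1 = i then 1 else 0 := by
        simp only [absStencil, sum_add_distrib]
    _ ≤ 2 + 1 + 1 := by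
        gcongr <;> exact sum_ite_le_of_subsingleton (fun a b ha hb => Fin.ext (by omega))
          (by norm_num)
    _ = 4 := by norm_num

theorem abs_neg_two_div_mul_le {m a b : ℝ} (hm : 0 < m) (ha : m ≤ a) (hb : m ≤ b) :
    |-2 / (a * b)| ≤ 2 / m ^ 2 := by
  have : 0 < a := hm.trans_le ha
  have : 0 < b := hm.trans_le hb
  rw [neg_div, abs_neg, abs_of_pos (by positivity),
    div_le_div_iff₀ (by positivity) (by positivity)]
  nlinarith

theorem abs_two_div_mul_add_le {m a b : ℝ} (hm : 0 < m) (ha : m ≤ a) (hb : m ≤ b) :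
    |2 / (a * (a + b))| ≤ 1 / m ^ 2 := by
  have : 0 < a := hm.trans_le ha
  have : 0 < b := hm.trans_le hb
  rw [abs_of_pos (by positivity), div_le_div_iff₀ (by positivity) (by positivity)]
  nlinarith

theorem abs_Pmat_apply_le {N : ℕ} {h : Fin (N + 1) → ℝ} {m : ℝ} (hm : 0 < m)
    (hmh : ∀ k, m ≤ h k) (i j : Fin N) : |Pmat N h i j| ≤ absStencil i j / m ^ 2 := by
  have ha := hmh i.castSucc
  have hb := hmh i.succ
  simp only [Pmat, absStencil, of_apply]
  split_ifs <;> (try omega) <;> simp only [add_zero, zero_add]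
  · exact abs_neg_two_div_mul_le hm ha hb
  · rw [add_comm (h _)]
    exact abs_two_div_mul_add_le hm hb ha
  · exact abs_two_div_mul_add_le hm ha hb
  · simp

theorem sum_norm_Pmat_row_le {N : ℕ} {h : Fin (N + 1) → ℝ} {m : ℝ} (hm : 0 < m)
    (hmh : ∀ k, m ≤ h k) (i : Fin N) : ∑ j, ‖Pmat N h i j‖ ≤ 4 / m ^ 2 :=
  calc ∑ j, ‖Pmat N h i j‖ ≤ ∑ j, absStencil i j / m ^ 2 :=
        sum_le_sum fun j _ => abs_Pmat_apply_le hm hmh i j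
    _ = (∑ j, absStencil i j) / m ^ 2 := (sum_div ..).symm
    _ ≤ 4 / m ^ 2 := by gcongr; exact sum_absStencil_le i

theorem sum_norm_Pmat_col_le {N : ℕ} {h : Fin (N + 1) → ℝ} {m : ℝ} (hm : 0 < m)
    (hmh : ∀ k, m ≤ h k) (j : Fin N) : ∑ i, ‖Pmat N h i j‖ ≤ 4 / m ^ 2 :=
  calc ∑ i, ‖Pmat N h i j‖ ≤ ∑ i, absStencil j i / m ^ 2 :=
        sum_le_sum fun i _ => (abs_Pmat_apply_le hm hmh i j).trans_eq (by rw [absStencil_comm])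
    _ = (∑ i, absStencil j i) / m ^ 2 := (sum_div ..).symm
    _ ≤ 4 / m ^ 2 := by gcongr; exact sum_absStencil_le j

theorem spectral_norm_bound_general (N : ℕ) (h : Fin (N + 1) → ℝ)
    (hpos : ∀ i, 0 < h i) :
    specNorm (Pmat N h) ≤
      Finset.univ.sup' Finset.univ_nonempty (fun i : Fin (N + 1) => 4 / (h i) ^ 2) := by
  obtain ⟨k, hk⟩ := Finite.exists_min h
  have hM : 0 ≤ 4 / h k ^ 2 := by positivity
  calc specNorm (Pmat N h) ≤ √(4 / h k ^ 2 * (4 / h k ^ 2)) :=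
        norm_toEuclideanCLM_le_sqrt_of_sum_norm_le _ hM (sum_norm_Pmat_row_le (hpos k) hk)
          (sum_norm_Pmat_col_le (hpos k) hk)
    _ = 4 / h k ^ 2 := Real.sqrt_mul_self hM
    _ ≤ _ := le_sup' (fun i => 4 / h i ^ 2) (mem_univ k)

theorem spectral_norm_bound (N : ℕ) (hN : 1 ≤ N) (h : Fin (N + 1) → ℝ)
    (hpos : ∀ i, 0 < h i) :
    specNorm (Pmat N h) ≤
      Finset.univ.sup' Finset.univ_nonempty (fun i : Fin (N + 1) => 4 / (h i) ^ 2) :=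
  spectral_norm_bound_general N h hpos
end

section
/- Under the step-size condition τ < a² h² / (2‖B‖₂), the matrix A = I - (τ/2)M (with M = (1/a²) B P as above) has nonpositive off-diagonal entries, diagonal entries greater than 1, and is strictly diagonally dominant with positive diagonal; consequently A is an M-matrix, i.e., A is invertible and every entry of A⁻¹ is nonnegative. -/
open Matrix Finset

/-- Minimum principle: a strictly diagonally dominant matrix with positive diagonal and
nonpositive off-diagonal maps nonnegative-image vectors to nonnegative vectors. -/
lemma min_principle {N : ℕ} (hN : 1 ≤ N) (A : Matrix (Fin N) (Fin N) ℝ)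
    (hoff : ∀ i j, i ≠ j → A i j ≤ 0)
    (hdom : ∀ i, ∑ j ∈ Finset.univ.erase i, |A i j| < A i i)
    (x : Fin N → ℝ) (hx : ∀ i, 0 ≤ ∑ j, A i j * x j) : ∀ i, 0 ≤ x i := by
  have hne : (Finset.univ : Finset (Fin N)).Nonempty := by
    have : Nonempty (Fin N) := ⟨⟨0, hN⟩⟩
    exact Finset.univ_nonempty
  obtain ⟨i₀, -, hmin⟩ := Finset.exists_min_image Finset.univ x hne
  have hmin' : ∀ j : Fin N, x i₀ ≤ x j := fun j => hmin j (Finset.mem_univ j)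
  by_contra hcon
  push_neg at hcon
  obtain ⟨i, hi⟩ := hcon
  have hx0 : x i₀ < 0 := lt_of_le_of_lt (hmin' i) hi
  have key : ∑ j, A i₀ j * x j < 0 := by
    have hsplit : ∑ j, A i₀ j * x j
        = A i₀ i₀ * x i₀ + ∑ j ∈ Finset.univ.erase i₀, A i₀ j * x j := by
      rw [← Finset.sum_erase_add _ _ (Finset.mem_univ i₀)]
      ring
    have hterm : ∀ j ∈ Finset.univ.erase i₀, A i₀ j * x j ≤ A i₀ j * x i₀ := by
      intro j hj
      have hji : j ≠ i₀ := (Finset.mem_erase.mp hj).1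
      exact mul_le_mul_of_nonpos_left (hmin' j) (hoff i₀ j (Ne.symm hji))
    have hsum_le : ∑ j ∈ Finset.univ.erase i₀, A i₀ j * x j
        ≤ (∑ j ∈ Finset.univ.erase i₀, A i₀ j) * x i₀ := by
      rw [Finset.sum_mul]
      exact Finset.sum_le_sum hterm
    have habs : -(∑ j ∈ Finset.univ.erase i₀, |A i₀ j|) ≤ ∑ j ∈ Finset.univ.erase i₀, A i₀ j := by
      rw [← Finset.sum_neg_distrib]
      exact Finset.sum_le_sum fun j _ => neg_abs_le _
    have hpos : 0 < A i₀ i₀ + ∑ j ∈ Finset.univ.erase i₀, A i₀ j := by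
      have := hdom i₀
      linarith
    calc ∑ j, A i₀ j * x j
        ≤ A i₀ i₀ * x i₀ + (∑ j ∈ Finset.univ.erase i₀, A i₀ j) * x i₀ := by
          rw [hsplit]; linarith
      _ = (A i₀ i₀ + ∑ j ∈ Finset.univ.erase i₀, A i₀ j) * x i₀ := by ring
      _ < 0 := mul_neg_of_pos_of_neg hpos hx0
  exact absurd (hx i₀) (not_le.mpr key)

set_option maxHeartbeats 1000000 in
theorem implicit_factor_is_M_matrix (N : ℕ) (hN : 1 ≤ N) (h : Fin (N + 1) → ℝ)
    (hpos : ∀ i, 0 < h i) (σ : Fin N → ℝ) (hσ : ∀ i, 0 < σ i) (a : ℝ) (ha : 0 < a)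
    (B M A : Matrix (Fin N) (Fin N) ℝ)
    (hB : B = Matrix.diagonal fun i => 1 / σ i)
    (hM : M = (1 / a ^ 2) • (B * Pmat N h))
    (τ : ℝ) (hτ0 : 0 < τ)
    (hA : A = 1 - (τ / 2) • M)
    (hτ : τ < a ^ 2 * (Finset.univ.inf' Finset.univ_nonempty h) ^ 2 / (2 * specNorm B)) :
    (∀ i j, i ≠ j → A i j ≤ 0) ∧
    (∀ i, 1 < A i i) ∧
    (∀ i, ∑ j ∈ Finset.univ.erase i, |A i j| < A i i) ∧
    IsUnit A ∧
    (∀ i j, 0 ≤ A⁻¹ i j) := by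
  -- the positive coefficient in front of P
  set c : Fin N → ℝ := fun i => τ / 2 * (1 / a ^ 2 * (1 / σ i)) with hc
  have hcpos : ∀ i, 0 < c i := by
    intro i
    have h1 := hσ i
    have h2 : (0:ℝ) < a ^ 2 := by positivity
    rw [hc]
    positivity
  -- entry formula for A
  have hAij : ∀ i j, A i j = (if i = j then (1:ℝ) else 0) - c i * Pmat N h i j := by
    intro i j
    subst hA hM hB
    simp [Matrix.sub_apply, Matrix.smul_apply, Matrix.one_apply, Matrix.diagonal_mul,
      smul_eq_mul, hc]
    ring
  -- off-diagonal entries of P are nonnegative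
  have hPnn : ∀ i j : Fin N, i ≠ j → 0 ≤ Pmat N h i j := by
    intro i j hij
    have h1 := hpos i.castSucc
    have h2 := hpos i.succ
    have hval : (i : ℕ) ≠ (j : ℕ) := fun hv => hij (Fin.ext hv)
    simp only [Pmat, Matrix.of_apply, if_neg hval]
    split_ifs <;> positivity
  -- off-diagonal entries of A
  have hoff : ∀ i j, i ≠ j → A i j ≤ 0 := by
    intro i j hij
    rw [hAij i j, if_neg hij, zero_sub, neg_nonpos]
    exact mul_nonneg (le_of_lt (hcpos i)) (hPnn i j hij)
  -- diagonal entries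
  have hdiagP : ∀ i : Fin N, Pmat N h i i = -2 / (h i.castSucc * h i.succ) := by
    intro i
    simp [Pmat]
  have hdiag : ∀ i, A i i = 1 + c i * (2 / (h i.castSucc * h i.succ)) := by
    intro i
    rw [hAij i i, if_pos rfl, hdiagP i]
    ring
  have hdiag1 : ∀ i, 1 < A i i := by
    intro i
    rw [hdiag i]
    have h1 := hpos i.castSucc
    have h2 := hpos i.succ
    have h3 := hcpos i
    have : 0 < c i * (2 / (h i.castSucc * h i.succ)) := by positivity
    linarith
  -- strict diagonal dominance
  have hdom : ∀ i, ∑ j ∈ Finset.univ.erase i, |A i j| < A i i := by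
    intro i
    have h1 := hpos i.castSucc
    have h2 := hpos i.succ
    have ht1nn : (0:ℝ) ≤ 2 / (h i.succ * (h i.castSucc + h i.succ)) := by positivity
    have ht2nn : (0:ℝ) ≤ 2 / (h i.castSucc * (h i.castSucc + h i.succ)) := by positivity
    -- row sum of off-diagonal P entries
    have hsumP : ∑ j ∈ Finset.univ.erase i, Pmat N h i j
        ≤ 2 / (h i.succ * (h i.castSucc + h i.succ))
          + 2 / (h i.castSucc * (h i.castSucc + h i.succ)) := by
      have hcongr : ∑ j ∈ Finset.univ.erase i, Pmat N h i j
          = ∑ j ∈ Finset.univ.erase i,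
              ((if (i : ℕ) + 1 = (j : ℕ) then 2 / (h i.succ * (h i.castSucc + h i.succ)) else 0)
                + (if (j : ℕ) + 1 = (i : ℕ) then
                    2 / (h i.castSucc * (h i.castSucc + h i.succ)) else 0)) := by
        refine Finset.sum_congr rfl fun j hj => ?_
        have hji : j ≠ i := (Finset.mem_erase.mp hj).1
        have hval : (i : ℕ) ≠ (j : ℕ) := fun hv => hji (Fin.ext hv.symm)
        simp only [Pmat, Matrix.of_apply, if_neg hval]
        split_ifs with hp hq hr <;> [omega; ring; ring; ring]
      rw [hcongr]
      have hle_univ := Finset.sum_le_sum_of_subset_of_nonneg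
        (Finset.erase_subset i (Finset.univ : Finset (Fin N)))
        (f := fun j : Fin N =>
          ((if (i : ℕ) + 1 = (j : ℕ) then 2 / (h i.succ * (h i.castSucc + h i.succ)) else 0)
            + (if (j : ℕ) + 1 = (i : ℕ) then
                2 / (h i.castSucc * (h i.castSucc + h i.succ)) else 0)))
        (fun j _ _ => by positivity)
      refine hle_univ.trans ?_
      rw [Finset.sum_add_distrib]
      have hS1 : ∑ j : Fin N,
          (if (i : ℕ) + 1 = (j : ℕ) then 2 / (h i.succ * (h i.castSucc + h i.succ)) else 0)
          ≤ 2 / (h i.succ * (h i.castSucc + h i.succ)) := by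
        by_cases hlt : (i : ℕ) + 1 < N
        · have heq : ∀ j : Fin N, ((i : ℕ) + 1 = (j : ℕ)) ↔ j = ⟨(i : ℕ) + 1, hlt⟩ := by
            intro j; rw [Fin.ext_iff]; constructor <;> intro hh <;> simp_all
          simp_rw [heq]
          rw [Finset.sum_ite_eq' Finset.univ]
          simp
        · have hfalse : ∀ j : Fin N, ¬((i : ℕ) + 1 = (j : ℕ)) := by
            intro j; have := j.isLt; omega
          simp [hfalse, ht1nn]
      have hS2 : ∑ j : Fin N,
          (if (j : ℕ) + 1 = (i : ℕ) then 2 / (h i.castSucc * (h i.castSucc + h i.succ)) else 0)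
          ≤ 2 / (h i.castSucc * (h i.castSucc + h i.succ)) := by
        by_cases hlt : 0 < (i : ℕ)
        · have hlt2 : (i : ℕ) - 1 < N := by have := i.isLt; omega
          have heq : ∀ j : Fin N, ((j : ℕ) + 1 = (i : ℕ)) ↔ j = ⟨(i : ℕ) - 1, hlt2⟩ := by
            intro j; rw [Fin.ext_iff]; constructor <;> intro hh <;> simp_all <;> omega
          simp_rw [heq]
          rw [Finset.sum_ite_eq' Finset.univ]
          simp
        · have hfalse : ∀ j : Fin N, ¬((j : ℕ) + 1 = (i : ℕ)) := by
            intro j; omega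
          simp [hfalse, ht2nn]
      linarith
    -- |A i j| = c i * P i j off the diagonal
    have habsA : ∀ j ∈ Finset.univ.erase i, |A i j| = c i * Pmat N h i j := by
      intro j hj
      have hji : j ≠ i := (Finset.mem_erase.mp hj).1
      rw [hAij i j, if_neg (Ne.symm hji), zero_sub, abs_neg,
        abs_of_nonneg (mul_nonneg (le_of_lt (hcpos i)) (hPnn i j (Ne.symm hji)))]
    have ht12 : 2 / (h i.succ * (h i.castSucc + h i.succ))
          + 2 / (h i.castSucc * (h i.castSucc + h i.succ))
        = 2 / (h i.castSucc * h i.succ) := by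
      have hne1 : h i.castSucc ≠ 0 := ne_of_gt h1
      have hne2 : h i.succ ≠ 0 := ne_of_gt h2
      have hne3 : h i.castSucc + h i.succ ≠ 0 := by positivity
      field_simp
    have hci := hcpos i
    calc ∑ j ∈ Finset.univ.erase i, |A i j|
        = ∑ j ∈ Finset.univ.erase i, c i * Pmat N h i j := Finset.sum_congr rfl habsA
      _ = c i * ∑ j ∈ Finset.univ.erase i, Pmat N h i j := by rw [Finset.mul_sum]
      _ ≤ c i * (2 / (h i.succ * (h i.castSucc + h i.succ))
            + 2 / (h i.castSucc * (h i.castSucc + h i.succ))) :=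
          mul_le_mul_of_nonneg_left hsumP (le_of_lt hci)
      _ = c i * (2 / (h i.castSucc * h i.succ)) := by rw [ht12]
      _ < 1 + c i * (2 / (h i.castSucc * h i.succ)) := by linarith
      _ = A i i := (hdiag i).symm
  -- invertibility
  have hdet : A.det ≠ 0 := by
    apply det_ne_zero_of_sum_row_lt_diag
    intro k
    have := hdom k
    have h1 := hdiag1 k
    simp only [Real.norm_eq_abs]
    calc ∑ j ∈ Finset.univ.erase k, |A k j| < A k k := this
      _ ≤ |A k k| := le_abs_self _
  have hunit : IsUnit A := (Matrix.isUnit_iff_isUnit_det A).mpr (isUnit_iff_ne_zero.mpr hdet)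
  -- inverse nonnegativity via min principle
  have hinv : ∀ i j, 0 ≤ A⁻¹ i j := by
    intro i j
    have hAAinv : A * A⁻¹ = 1 := Matrix.mul_nonsing_inv A (isUnit_iff_ne_zero.mpr hdet)
    have := min_principle hN A hoff hdom (fun k => A⁻¹ k j) ?_ i
    · exact this
    · intro k
      have : ∑ l, A k l * A⁻¹ l j = (A * A⁻¹) k j := rfl
      rw [this, hAAinv, Matrix.one_apply]
      split_ifs <;> norm_num
  exact ⟨hoff, hdiag1, hdom, hunit, hinv⟩
end

section
/- Let B ∈ ℝ^{N×N} be a positive diagonal matrix and let Q ∈ ℝ^{N×N} be such that B^{1/2} Q B^{1/2} is symmetric negative semidefinite, where M = B Q. Then for any finite sequence of times τ_0, ..., τ_ℓ ≥ 0, the product of matrix exponentials satisfies ‖∏_{k=0}^{ℓ} exp(τ_k M)‖₂ ≤ √(κ(B)), where κ(B) = ‖B‖₂ ‖B⁻¹‖₂ is the spectral condition number of B. -/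
open Matrix Finset

/-!
Write `R = B^{1/2}`, a self-adjoint unit. Then `M = B Q = R S R⁻¹` with `S = R Q R ≤ 0`, so the
product of the `exp (τ_k M)` is `R (∏ exp (τ_k S)) R⁻¹`. By the continuous functional calculus
each `exp (τ_k S)` has spectrum in `(0, 1]` and hence norm at most `1`, so the product has norm
at most `‖R‖ ‖R⁻¹‖`; the C⋆-identity `‖R‖² = ‖R * R‖ = ‖B‖` (and likewise for `R⁻¹`) turns this
into `√(‖B‖ ‖B⁻¹‖)`.
-/

theorem List.prod_map_units_conj {ι M : Type*} [Monoid M] (u : Mˣ) (f : ι → M) (l : List ι) :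
    (l.map fun i => (u : M) * f i * ↑u⁻¹).prod = ↑u * (l.map f).prod * ↑u⁻¹ := by
  induction l with
  | nil => simp
  | cons i l ih =>
    rw [List.map_cons, List.map_cons, List.prod_cons, List.prod_cons, ih]
    simp [mul_assoc]

theorem List.norm_prod_le_one {R : Type*} [NormedRing R] :
    ∀ {l : List R}, l ≠ [] → (∀ x ∈ l, ‖x‖ ≤ 1) → ‖l.prod‖ ≤ 1
  | [x], _, h => by simpa using h x (by simp)
  | x :: y :: l, _, h => by
    rw [List.prod_cons]
    refine (norm_mul_le _ _).trans (mul_le_one₀ (h x (by simp)) (norm_nonneg _) ?_)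
    exact List.norm_prod_le_one (by simp) fun z hz => h z (List.mem_cons_of_mem x hz)

theorem IsSelfAdjoint.sqrt_norm_mul_self_mul_norm_mul_self {E : Type*} [NonUnitalNormedRing E]
    [StarRing E] [CStarRing E] {x y : E} (hx : IsSelfAdjoint x) (hy : IsSelfAdjoint y) :
    √(‖x * x‖ * ‖y * y‖) = ‖x‖ * ‖y‖ := by
  rw [hx.norm_mul_self, hy.norm_mul_self, ← mul_pow, Real.sqrt_sq (by positivity)]

section Nonpositive

variable {A : Type*} [NormedRing A] [StarRing A] [NormedAlgebra ℝ A] [PartialOrder A]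
  [StarOrderedRing A] [NonnegSpectrumClass ℝ A]
  [IsometricContinuousFunctionalCalculus ℝ A IsSelfAdjoint]

theorem norm_exp_le_one_of_nonpos {a : A} (ha : a ≤ 0) : ‖NormedSpace.exp a‖ ≤ 1 := by
  have ha_sa : IsSelfAdjoint a := by
    simpa using (IsSelfAdjoint.of_nonneg (neg_nonneg.mpr ha)).neg
  have hspec : ∀ x ∈ spectrum ℝ a, x ≤ 0 :=
    (le_algebraMap_iff_spectrum_le (r := (0 : ℝ)) ha_sa).mp (by simpa using ha)
  rw [← CFC.real_exp_eq_normedSpace_exp ha_sa]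
  refine norm_cfc_le zero_le_one fun x hx => ?_
  simpa [abs_of_pos (Real.exp_pos x)] using hspec x hx

theorem norm_list_prod_exp_smul_units_conj_le [StarModule ℝ A] [CompleteSpace A] {u : Aˣ}
    {s : A} (hs : s ≤ 0) {l : List ℝ} (hl : l ≠ []) (hl_nonneg : ∀ t ∈ l, 0 ≤ t) :
    ‖(l.map fun t => NormedSpace.exp (t • (↑u * s * ↑u⁻¹))).prod‖ ≤ ‖(u : A)‖ * ‖(↑u⁻¹ : A)‖ := by
  -- `NormedSpace.exp_units_conj` is stated for normed `ℚ`-algebras.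
  let : NormedAlgebra ℚ A := .restrictScalars ℚ ℝ A
  have hconj (t : ℝ) :
      NormedSpace.exp (t • (↑u * s * ↑u⁻¹)) = ↑u * NormedSpace.exp (t • s) * ↑u⁻¹ := by
    rw [← NormedSpace.exp_units_conj, mul_smul_comm, smul_mul_assoc]
  have hprod : ‖(l.map fun t => NormedSpace.exp (t • s)).prod‖ ≤ 1 := by
    refine List.norm_prod_le_one (by simpa using hl) ?_
    simp only [List.mem_map]
    rintro _ ⟨t, ht, rfl⟩
    exact norm_exp_le_one_of_nonpos (smul_nonpos_of_nonneg_of_nonpos (hl_nonneg t ht) hs)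
  simp_rw [hconj]
  rw [List.prod_map_units_conj]
  calc _ ≤ ‖(u : A)‖ * ‖(l.map fun t => NormedSpace.exp (t • s)).prod‖ * ‖(↑u⁻¹ : A)‖ :=
        norm_mul₃_le
    _ ≤ ‖(u : A)‖ * 1 * ‖(↑u⁻¹ : A)‖ := by gcongr
    _ = _ := by rw [mul_one]

end Nonpositive

open scoped Matrix.Norms.L2Operator MatrixOrder

theorem specNorm_eq_l2_opNorm {N : ℕ} (A : Matrix (Fin N) (Fin N) ℝ) : specNorm A = ‖A‖ :=
  rfl

theorem exp_product_norm_le_sqrt_cond (N : ℕ) (b : Fin N → ℝ) (hb : ∀ i, 0 < b i)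
    (Q : Matrix (Fin N) (Fin N) ℝ)
    (hQ : (-(Matrix.diagonal (fun i => Real.sqrt (b i)) * Q *
        Matrix.diagonal (fun i => Real.sqrt (b i)))).PosSemidef)
    (ℓ : ℕ) (τ : Fin (ℓ + 1) → ℝ) (hτ : ∀ k, 0 ≤ τ k) :
    specNorm ((List.ofFn fun k : Fin (ℓ + 1) =>
        NormedSpace.exp (τ k • (Matrix.diagonal b * Q))).prod) ≤
      Real.sqrt (specNorm (Matrix.diagonal b) * specNorm (Matrix.diagonal b)⁻¹) := by
  simp only [specNorm_eq_l2_opNorm]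
  obtain ⟨u, hu⟩ : IsUnit (diagonal fun i => √(b i)) :=
    isUnit_diagonal.mpr (Pi.isUnit_iff.mpr fun i => (Real.sqrt_pos.mpr (hb i)).ne'.isUnit)
  rw [← hu] at hQ
  have hB : diagonal b = u * u := by
    simp [hu, diagonal_mul_diagonal, Real.mul_self_sqrt (hb _).le]
  have hM : diagonal b * Q = u * (u * Q * u) * (↑u⁻¹ : Matrix (Fin N) (Fin N) ℝ) := by
    rw [hB, ← mul_assoc, ← mul_assoc, Units.mul_inv_cancel_right]
  have hu_sa : IsSelfAdjoint (u : Matrix (Fin N) (Fin N) ℝ) := hu ▸ isHermitian_diagonal _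
  have hu_inv_sa : IsSelfAdjoint (↑u⁻¹ : Matrix (Fin N) (Fin N) ℝ) := by
    rw [coe_units_inv]
    exact IsHermitian.inv hu_sa
  have hprod := norm_list_prod_exp_smul_units_conj_le (u := u) (neg_nonneg.mp hQ.nonneg)
    (l := List.ofFn τ) (by simp) (List.forall_mem_ofFn_iff.mpr hτ)
  rw [List.map_ofFn, ← hM] at hprod
  calc _ ≤ ‖(u : Matrix (Fin N) (Fin N) ℝ)‖ * ‖(↑u⁻¹ : Matrix (Fin N) (Fin N) ℝ)‖ := hprod
    _ = _ := by
      rw [hB, Matrix.mul_inv_rev, ← coe_units_inv]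
      exact (hu_sa.sqrt_norm_mul_self_mul_norm_mul_self hu_inv_sa).symm
end
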